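/- arXiv:0812.4434 — 6 statements merged into one kernel-verified Lean document; each statement's English description precedes it below -/
import Mathlib

section
/- Let R₁, R₂ be right ideals of A* with R₂ finitely generated as a right ideal. If every word w ∈ A* such that wA* intersects R₁ satisfies that wA* intersects R₂, then ends(R₁) ⊆ ends(R₂), where ends(R) is the set of infinite words over A having some finite prefix in R. -/
/-- `R` is a right ideal of the free monoid `A*` (words = `List A`). -/
def IsRightIdeal {A : Type*} (R : Set (List A)) : Prop :=
  ∀ r ∈ R, ∀ w : List A, r ++ w ∈ R

/-- The right ideal `S·A*` generated by a set of words `S`. -/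
def setIdeal {A : Type*} (S : Set (List A)) : Set (List A) :=
  {l | ∃ s ∈ S, ∃ w : List A, l = s ++ w}

/-- The set of ends (infinite words) having some finite prefix in `R`. -/
def ends {A : Type*} (R : Set (List A)) : Set (ℕ → A) :=
  {z | ∃ n : ℕ, (List.ofFn fun i : Fin n => z i) ∈ R}

/-- A prefix code: no element is a proper prefix of another. -/
def IsPrefixCode {A : Type*} (P : Set (List A)) : Prop :=
  ∀ p ∈ P, ∀ q ∈ P, p <+: q → p = q

theorem ends_subset_of_monogenic_intersect {A : Type*} [Fintype A]
    (R₁ R₂ : Set (List A)) (h₁ : IsRightIdeal R₁) (h₂ : IsRightIdeal R₂)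
    (hfg : ∃ S : Set (List A), S.Finite ∧ R₂ = setIdeal S)
    (h : ∀ w : List A, (setIdeal {w} ∩ R₁).Nonempty → (setIdeal {w} ∩ R₂).Nonempty) :
    ends R₁ ⊆ ends R₂ := by
  obtain ⟨S, hSfin, hS⟩ := hfg
  obtain ⟨N, hN⟩ : ∃ N, ∀ s ∈ S, s.length ≤ N := by
    obtain ⟨N, hN⟩ := (hSfin.image List.length).bddAbove
    exact ⟨N, fun s hs => hN ⟨s, hs, rfl⟩⟩
  rintro z ⟨n, hn⟩
  set m := max n N with hm
  -- the prefix of z of length m is in R₁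
  have hofm : (List.ofFn fun i : Fin m => z i) =
      (List.ofFn fun i : Fin n => z i) ++
      (List.ofFn fun i : Fin (m - n) => z (n + i)) := by
    have hmn : m = n + (m - n) := by omega
    rw [List.ofFn_congr hmn (fun i : Fin m => z i)]
    rw [List.ofFn_add]
    rfl
  have hwR₁ : (List.ofFn fun i : Fin m => z i) ∈ R₁ := by
    rw [hofm]; exact h₁ _ hn _
  set w := (List.ofFn fun i : Fin m => z i) with hw
  have hne : (setIdeal {w} ∩ R₁).Nonempty :=
    ⟨w, ⟨w, rfl, [], (List.append_nil w).symm⟩, hwR₁⟩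
  obtain ⟨x, ⟨w', hw', u, hxu⟩, hxR₂⟩ := h w hne
  rw [Set.mem_singleton_iff] at hw'
  subst hw'
  rw [hS] at hxR₂
  obtain ⟨s, hs, v, hxv⟩ := hxR₂
  have hpre : s <+: w := by
    apply List.prefix_of_prefix_length_le (l₃ := x)
    · exact hxv ▸ List.prefix_append s v
    · exact hxu ▸ List.prefix_append w u
    · have := hN s hs
      have : s.length ≤ N := this
      simp [hw, List.length_ofFn]
      omega
  obtain ⟨t, ht⟩ := hpre
  refine ⟨m, ?_⟩
  rw [hS, ← hw, ← ht]
  exact ⟨s, hs, t, rfl⟩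
end

section
/- There exist right ideals R₁, R₂ of {a,b}* such that every right ideal intersecting R₁ also intersects R₂, yet ends(R₁) is not contained in ends(R₂). Concretely, R₁ = a{a,b}* and R₂ = a*b{a,b}* have this property (the infinite word aaa... lies in ends(R₁) but not in ends(R₂)). -/
/-- Any generated ideal is a right ideal. -/
lemma setIdeal_isRightIdeal {A : Type*} (S : Set (List A)) :
    IsRightIdeal (setIdeal S) := by
  rintro r ⟨s, hs, w, rfl⟩ w'
  exact ⟨s, hs, w ++ w', by simp⟩

/-- Any word containing `false` belongs to the ideal generated by `aⁿb`. -/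
lemma mem_R2_of_false (l : List Bool) (h : false ∈ l) :
    l ∈ setIdeal {l : List Bool | ∃ n : ℕ, l = List.replicate n true ++ [false]} := by
  induction l with
  | nil => simp at h
  | cons x t ih =>
    cases x with
    | false =>
      exact ⟨[false], ⟨0, by simp⟩, t, rfl⟩
    | true =>
      simp at h
      obtain ⟨s, ⟨n, rfl⟩, w, rfl⟩ := ih h
      exact ⟨List.replicate (n + 1) true ++ [false], ⟨n + 1, rfl⟩, w, by
        simp [List.replicate_succ]⟩

theorem counterexample_ends_inclusion :
    let a : Bool := true
    let b : Bool := false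
    let R₁ : Set (List Bool) := setIdeal {[a]}
    let R₂ : Set (List Bool) := setIdeal {l : List Bool | ∃ n : ℕ, l = List.replicate n a ++ [b]}
    IsRightIdeal R₁ ∧ IsRightIdeal R₂ ∧
    (∀ R : Set (List Bool), IsRightIdeal R → R.Nonempty →
        (R ∩ R₁).Nonempty → (R ∩ R₂).Nonempty) ∧
    (fun _ : ℕ => a) ∈ ends R₁ ∧ (fun _ : ℕ => a) ∉ ends R₂ ∧
    ¬ ends R₁ ⊆ ends R₂ := by
  intro a b R₁ R₂
  refine ⟨setIdeal_isRightIdeal _, setIdeal_isRightIdeal _, ?_, ?_, ?_, ?_⟩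
  · rintro R hR _ ⟨r, hrR, hr1⟩
    refine ⟨r ++ [b], hR r hrR [b], mem_R2_of_false _ ?_⟩
    simp [b]
  · exact ⟨1, ⟨[a], rfl, [], by simp [a]⟩⟩
  · rintro ⟨n, s, ⟨m, rfl⟩, w, hw⟩
    have h : false ∈ (List.ofFn fun _ : Fin n => a) := by
      rw [hw]; simp [b]
    simp [a, List.mem_ofFn] at h
  · intro hsub
    have h1 : (fun _ : ℕ => a) ∈ ends R₁ := ⟨1, ⟨[a], rfl, [], by simp [a]⟩⟩
    have h2 := hsub h1
    obtain ⟨n, s, ⟨m, rfl⟩, w, hw⟩ := h2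
    have h : false ∈ (List.ofFn fun _ : Fin n => a) := by
      rw [hw]; simp [b]
    simp [a, List.mem_ofFn] at h
end

section
/- Let P₁, P₂ ⊂ A* be finite prefix codes and let N be the maximum length of a word in P₁ ∪ P₂. Then ends(P₁A*) ⊆ ends(P₂A*) if and only if every word w ∈ A* of length N that has a prefix in P₁ also has a prefix in P₂. -/
theorem myOfFn_prefix {A : Type*} (z : ℕ → A) {m n : ℕ} (h : m ≤ n) :
    (List.ofFn fun i : Fin m => z i) <+: (List.ofFn fun i : Fin n => z i) := by
  rw [List.prefix_iff_eq_take]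
  apply List.ext_getElem
  · simp [h]
  · intro i h1 h2
    simp at h2 ⊢

theorem mem_setIdeal' {A : Type*} {S : Set (List A)} {l : List A} :
    l ∈ setIdeal S ↔ ∃ s ∈ S, s <+: l := by
  constructor
  · rintro ⟨s, hs, w, rfl⟩; exact ⟨s, hs, w, rfl⟩
  · rintro ⟨s, hs, w, rfl⟩; exact ⟨s, hs, w, rfl⟩

theorem ends_inclusion_iff_length_N {A : Type*} [Fintype A] [DecidableEq A]
    (hA : 2 ≤ Fintype.card A)
    (P₁ P₂ : Finset (List A))
    (hP₁ : IsPrefixCode (P₁ : Set (List A))) (hP₂ : IsPrefixCode (P₂ : Set (List A)))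
    (N : ℕ) (hN : N = (P₁ ∪ P₂).sup fun p => p.length) :
    ends (setIdeal (P₁ : Set (List A))) ⊆ ends (setIdeal (P₂ : Set (List A))) ↔
      ∀ w : List A, w.length = N → (∃ p ∈ P₁, p <+: w) → ∃ p ∈ P₂, p <+: w := by
  constructor
  · rintro h w hw ⟨p, hp, hpw⟩
    obtain ⟨a⟩ : Nonempty A := Fintype.card_pos_iff.mp (by omega)
    set z : ℕ → A := fun i => w.getD i a with hzdef
    have hz : (List.ofFn fun i : Fin N => z i) = w := by
      apply List.ext_getElem
      · simp [hw]
      · intro i h1 h2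
        simp [hzdef, List.getD_eq_getElem _ _ h2, List.getElem?_eq_getElem h2]
    have hz1 : z ∈ ends (setIdeal (P₁ : Set (List A))) :=
      ⟨N, mem_setIdeal'.mpr ⟨p, hp, hz ▸ hpw⟩⟩
    obtain ⟨n, hn⟩ := h hz1
    obtain ⟨q, hq, hql⟩ := mem_setIdeal'.mp hn
    refine ⟨q, hq, ?_⟩
    have hqN : q.length ≤ N := hN ▸ Finset.le_sup (f := fun p => p.length)
      (Finset.mem_union_right _ hq)
    have h1 : q <+: (List.ofFn fun i : Fin (max n N) => z i) :=
      hql.trans (myOfFn_prefix z (le_max_left _ _))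
    have h2 : (List.ofFn fun i : Fin N => z i) <+:
        (List.ofFn fun i : Fin (max n N) => z i) := myOfFn_prefix z (le_max_right n N)
    have := List.prefix_of_prefix_length_le h1 h2 (by simpa using hqN)
    rwa [hz] at this
  · rintro h z ⟨n, hn⟩
    obtain ⟨p, hp, hpz⟩ := mem_setIdeal'.mp hn
    have hpN : p.length ≤ N := hN ▸ Finset.le_sup (f := fun p => p.length)
      (Finset.mem_union_left _ hp)
    have h1 : p <+: (List.ofFn fun i : Fin (max n N) => z i) :=
      hpz.trans (myOfFn_prefix z (le_max_left _ _))
    have h2 : (List.ofFn fun i : Fin N => z i) <+: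
        (List.ofFn fun i : Fin (max n N) => z i) := myOfFn_prefix z (le_max_right n N)
    have hw := List.prefix_of_prefix_length_le h1 h2 (by simpa using hpN)
    obtain ⟨q, hq, hqw⟩ := h _ (by simp) ⟨p, hp, hw⟩
    exact ⟨N, mem_setIdeal'.mpr ⟨q, hq, hqw⟩⟩
end

section
/- Let P, Q, R ⊆ A* with PA* ∩ QA* = RA*, and suppose R is a prefix code. Then R ⊆ P ∪ Q. -/
theorem prefixCode_of_ideal_intersection {A : Type*} (P Q R : Set (List A))
    (h : setIdeal P ∩ setIdeal Q = setIdeal R) (hR : IsPrefixCode R) :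
    R ⊆ P ∪ Q := by
  intro r hr
  have hrI : r ∈ setIdeal P ∩ setIdeal Q := by
    rw [h]; exact ⟨r, hr, [], by simp⟩
  obtain ⟨⟨p, hp, u, hu⟩, ⟨q, hq, v, hv⟩⟩ := hrI
  have hpu : p <+: r := ⟨u, hu.symm⟩
  have hqv : q <+: r := ⟨v, hv.symm⟩
  rcases List.prefix_or_prefix_of_prefix hpu hqv with hpq | hqp
  · -- p <+: q, so q ∈ setIdeal P ∩ setIdeal Q = setIdeal R
    obtain ⟨t, ht⟩ := hpq
    have hqR : q ∈ setIdeal R := by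
      rw [← h]
      exact ⟨⟨p, hp, t, ht.symm⟩, ⟨q, hq, [], by simp⟩⟩
    obtain ⟨s, hs, w, hw⟩ := hqR
    have hsr : s <+: r := List.IsPrefix.trans ⟨w, hw.symm⟩ hqv
    have : s = r := hR s hs r hr hsr
    rw [this] at hw
    have : q = r := hqv.eq_of_length (hqv.length_le.antisymm (List.IsPrefix.length_le ⟨w, hw.symm⟩))
    exact Or.inr (this ▸ hq)
  · obtain ⟨t, ht⟩ := hqp
    have hpR : p ∈ setIdeal R := by
      rw [← h]
      exact ⟨⟨p, hp, [], by simp⟩, ⟨q, hq, t, ht.symm⟩⟩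
    obtain ⟨s, hs, w, hw⟩ := hpR
    have hsr : s <+: r := List.IsPrefix.trans ⟨w, hw.symm⟩ hpu
    have : s = r := hR s hs r hr hsr
    rw [this] at hw
    have : p = r := hpu.eq_of_length (hpu.length_le.antisymm (List.IsPrefix.length_le ⟨w, hw.symm⟩))
    exact Or.inl (this ▸ hp)
end

section
/- The intersection of two finitely generated right ideals of the free monoid A* is a finitely generated right ideal. -/
theorem inter_finitelyGenerated_rightIdeals {A : Type*}
    (S₁ S₂ : Set (List A)) (h₁ : S₁.Finite) (h₂ : S₂.Finite) :
    ∃ S : Set (List A), S.Finite ∧ setIdeal S₁ ∩ setIdeal S₂ = setIdeal S := by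
  refine ⟨{s ∈ S₁ | ∃ t ∈ S₂, t <+: s} ∪ {s ∈ S₂ | ∃ t ∈ S₁, t <+: s},
    (h₁.subset (Set.sep_subset _ _)).union (h₂.subset (Set.sep_subset _ _)), ?_⟩
  ext l
  constructor
  · rintro ⟨⟨s₁, hs₁, w₁, rfl⟩, ⟨s₂, hs₂, w₂, he⟩⟩
    have hp1 : s₁ <+: s₁ ++ w₁ := ⟨w₁, rfl⟩
    have hp2 : s₂ <+: s₁ ++ w₁ := ⟨w₂, he.symm⟩
    rcases List.prefix_or_prefix_of_prefix hp1 hp2 with h | h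
    · exact ⟨s₂, Or.inr ⟨hs₂, s₁, hs₁, h⟩, w₂, he⟩
    · exact ⟨s₁, Or.inl ⟨hs₁, s₂, hs₂, h⟩, w₁, rfl⟩
  · rintro ⟨s, hs | hs, w, rfl⟩
    · obtain ⟨hs₁, t, ht, u, rfl⟩ := hs
      exact ⟨⟨t ++ u, hs₁, w, rfl⟩, ⟨t, ht, u ++ w, by simp⟩⟩
    · obtain ⟨hs₂, t, ht, u, rfl⟩ := hs
      exact ⟨⟨t, ht, u ++ w, by simp⟩, ⟨t ++ u, hs₂, w, rfl⟩⟩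
end

section
/- For a right ideal R of A*, the set ends(R) ⊆ A^ω is open in the product (Cantor) topology; moreover ends(R) is clopen (equivalently, compact) if and only if R is finitely generated as a right ideal. -/
section Aux
variable {A : Type*}
variable {A : Type*}

/-- The length-`n` prefix of an infinite word. -/
def pref (z : ℕ → A) (n : ℕ) : List A := List.ofFn fun i : Fin n => z i

lemma pref_length (z : ℕ → A) (n : ℕ) : (pref z n).length = n := List.length_ofFn

lemma pref_take (z : ℕ → A) {m n : ℕ} (h : m ≤ n) : (pref z n).take m = pref z m := by
  apply List.ext_getElem
  · simp [pref, h]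
  · intro i h1 h2
    simp [pref]

lemma pref_prefix (z : ℕ → A) {m n : ℕ} (h : m ≤ n) : pref z m <+: pref z n := by
  rw [List.prefix_iff_eq_take, pref_length, pref_take z h]

/-- The cylinder of words starting with `r`. -/
def cyl (r : List A) : Set (ℕ → A) := {z | pref z r.length = r}

lemma cyl_eq_iInter (r : List A) :
    cyl r = ⋂ i : Fin r.length, (fun z : ℕ → A => z i) ⁻¹' {r.get i} := by
  ext z
  simp only [cyl, Set.mem_setOf_eq, Set.mem_iInter, Set.mem_preimage, Set.mem_singleton_iff, pref]
  constructor
  · intro h i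
    have h1 := congrArg (fun l : List A => l.getD i.val (z i)) h
    simp only [List.getD_eq_getElem?_getD, List.getElem?_ofFn] at h1
    simp [List.get_eq_getElem, List.getElem?_eq_getElem, List.ofFnNthVal, i.isLt] at h1
    simpa [List.get_eq_getElem] using h1
  · intro h
    apply List.ext_getElem (by simp)
    intro i h1 h2
    simpa using h ⟨i, h2⟩

lemma isClopen_cyl [TopologicalSpace A] [DiscreteTopology A] (r : List A) :
    IsClopen (cyl r) := by
  rw [cyl_eq_iInter]
  constructor
  · exact isClosed_iInter fun i => (isClosed_discrete _).preimage (continuous_apply _)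
  · exact isOpen_iInter_of_finite fun i => (isOpen_discrete _).preimage (continuous_apply _)

lemma ends_eq_union (R : Set (List A)) : ends R = ⋃ r ∈ R, cyl r := by
  ext z
  simp only [ends, Set.mem_setOf_eq, Set.mem_iUnion]
  constructor
  · rintro ⟨n, hn⟩
    refine ⟨pref z n, hn, ?_⟩
    show pref z (pref z n).length = pref z n
    rw [pref_length]
  · rintro ⟨r, hr, hz⟩
    refine ⟨r.length, ?_⟩
    simp only [cyl, Set.mem_setOf_eq, pref] at hz
    rw [hz]; exact hr

variable {A : Type*}

/-- The minimal (prefix-minimal) elements of `R`. -/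
def minGen (R : Set (List A)) : Set (List A) :=
  {p | p ∈ R ∧ ∀ q ∈ R, q <+: p → q = p}

lemma minGen_prefixCode (R : Set (List A)) : IsPrefixCode (minGen R) :=
  fun p hp q hq hpq => hq.2 p hp.1 hpq

lemma eq_setIdeal_minGen {R : Set (List A)} (hR : IsRightIdeal R) :
    R = setIdeal (minGen R) := by
  ext r
  constructor
  · intro hr
    classical
    have hex : ∃ m, r.take m ∈ R := ⟨r.length, by simpa⟩
    set n := Nat.find hex with hn
    have hnle : n ≤ r.length := Nat.find_min' hex (by simpa)
    have hpR : r.take n ∈ R := Nat.find_spec hex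
    have hplen : (r.take n).length = n := by simp [hnle]
    refine ⟨r.take n, ⟨hpR, ?_⟩, r.drop n, (List.take_append_drop n r).symm⟩
    intro q hq hpre
    have hq1 : q = (r.take n).take q.length := List.prefix_iff_eq_take.mp hpre
    have hqlen : q.length ≤ n := by
      have := hpre.length_le; omega
    have hq2 : q = r.take q.length := by
      conv_lhs => rw [hq1]
      rw [List.take_take, min_eq_left hqlen]
    have : ¬ q.length < n := fun hlt => Nat.find_min hex hlt (hq2 ▸ hq)
    have hqn : q.length = n := le_antisymm hqlen (not_lt.mp this)
    calc q = (r.take n).take q.length := hq1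
      _ = (r.take n).take n := by rw [hqn]
      _ = r.take n := List.take_of_length_le hplen.le
  · rintro ⟨s, hs, w, rfl⟩
    exact hR s hs.1 w

lemma ends_setIdeal (S : Set (List A)) : ends (setIdeal S) = ⋃ s ∈ S, cyl s := by
  ext z
  simp only [ends, Set.mem_setOf_eq, Set.mem_iUnion]
  constructor
  · rintro ⟨n, s, hs, w, hw⟩
    refine ⟨s, hs, ?_⟩
    have hslen : s.length ≤ n := by
      have := congrArg List.length hw
      simp at this; omega
    have : s <+: pref z n := ⟨w, hw.symm⟩
    show pref z s.length = s
    rw [← pref_take z hslen, ← List.prefix_iff_eq_take.mp this]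
  · rintro ⟨s, hs, hz⟩
    exact ⟨s.length, s, hs, [], by rw [List.append_nil]; exact hz⟩

end Aux

theorem ends_open_and_clopen_iff_fg {A : Type*} [Fintype A] (hA : 2 ≤ Fintype.card A)
    [TopologicalSpace A] [DiscreteTopology A]
    (R : Set (List A)) (hR : IsRightIdeal R) :
    IsOpen (ends R) ∧
      (IsClopen (ends R) ↔ ∃ S : Set (List A), S.Finite ∧ R = setIdeal S) := by
  have hopen : IsOpen (ends R) := by
    rw [ends_eq_union]
    exact isOpen_biUnion fun r _ => (isClopen_cyl r).2
  refine ⟨hopen, ?_, ?_⟩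
  · -- clopen → finitely generated
    intro hcl
    have hne : Nonempty A := Fintype.card_pos_iff.mp (by omega)
    inhabit A
    have hcompact : IsCompact (ends R) := hcl.1.isCompact
    have hRP : R = setIdeal (minGen R) := eq_setIdeal_minGen hR
    have hcover : ends R ⊆ ⋃ p : minGen R, cyl (p : List A) := by
      conv_lhs => rw [hRP]
      rw [ends_setIdeal, Set.biUnion_eq_iUnion]
    obtain ⟨t, ht⟩ := hcompact.elim_finite_subcover (fun p : minGen R => cyl (p : List A))
      (fun p => (isClopen_cyl _).2) hcover
    refine ⟨minGen R, ?_, hRP⟩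
    have hsub : minGen R ⊆ Subtype.val '' (t : Set (minGen R)) := by
      intro p hp
      set z : ℕ → A := fun i => if h : i < p.length then p.get ⟨i, h⟩ else default with hz
      have hzp : z ∈ cyl p := by
        show pref z p.length = p
        apply List.ext_getElem (by simp [pref_length])
        intro i h1 h2
        simp only [pref_length] at h1
        simp [pref, hz, h1, List.get_eq_getElem]
      have hzR : z ∈ ends R := by
        rw [ends_eq_union]
        exact Set.mem_biUnion hp.1 hzp
      obtain ⟨q, hqt, hzq⟩ := Set.mem_iUnion₂.mp (ht hzR)
      have hq : (q : List A) ∈ minGen R := q.2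
      have hzq' : pref z (q : List A).length = q := hzq
      have hzp' : pref z p.length = p := hzp
      have hpq : p = (q : List A) := by
        rcases le_total p.length (q : List A).length with hle | hle
        · exact minGen_prefixCode R p hp q hq
            (by rw [← hzp', ← hzq']; exact pref_prefix z hle)
        · exact (minGen_prefixCode R q hq p hp
            (by rw [← hzp', ← hzq']; exact pref_prefix z hle)).symm
      exact ⟨q, hqt, hpq.symm⟩
    exact (t.finite_toSet.image _).subset hsub
  · -- finitely generated → clopen
    rintro ⟨S, hSfin, rfl⟩
    rw [ends_setIdeal]
    exact hSfin.isClopen_biUnion fun s _ => isClopen_cyl s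
end
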